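/- arXiv:2401.07262 — 2 statements merged into one kernel-verified Lean document; each statement's English description precedes it below -/
import Mathlib

section
/- Let $H$ be a bounded self-adjoint discrete Schrödinger operator on $\ell^2(\mathbb{Z}^d)$. Suppose the Combes-Thomas estimate holds: $|(H-E)^{-1}(n,m)| \le (2/\delta)\, e^{-c\delta|n-m|}$ for all $n,m$, where $\delta = \mathrm{dist}(E, \sigma(H)) > 0$ and $c > 0$. If $\psi$ is a generalized eigenfunction of $H$ with generalized eigenvalue $E \notin \sigma(H)$, then for every $L$ and every $n_0 \in \mathbb{Z}^d$, $\sum_{n \in \overline{\partial}\Lambda_L(n_0)} |\psi(n)| \ge \frac{\delta}{2d}\, e^{c\delta L}\, |\psi(n_0)|$. -/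
noncomputable section
open Complex Real MeasureTheory Filter
open scoped ENNReal NNReal

/-- Lattice sites of `ℤ^d`. -/
abbrev Site (d : ℕ) := Fin d → ℤ

/-- Sup norm `|n| = max_ν |n_ν|` on `ℤ^d` (as a natural number). -/
def supN {d : ℕ} (n : Site d) : ℕ := Finset.univ.sup fun ν => (n ν).natAbs

/-- The free discrete Laplacian `H₀ u (n) = ∑_{|j|=1} u (n+j)` (sum over the `2d`
nearest neighbours `±e_ν`), acting on arbitrary functions. -/
def lapOp {d : ℕ} (u : Site d → ℂ) (n : Site d) : ℂ :=
  ∑ ν : Fin d, (u (Function.update n ν (n ν + 1)) + u (Function.update n ν (n ν - 1)))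

/-- The discrete Schrödinger operator `H = H₀ + V` as a difference operator on
arbitrary functions. -/
def schrOp {d : ℕ} (V : Site d → ℝ) (u : Site d → ℂ) (n : Site d) : ℂ :=
  lapOp u n + (V n : ℂ) * u n

/-- The Hilbert space `ℓ²(ℤ^d)`. -/
abbrev L2 (d : ℕ) := lp (fun _ : Site d => ℂ) 2

/-- The standard basis vector `δ_n` of `ℓ²(ℤ^d)`. -/
def dl {d : ℕ} (n : Site d) : L2 d := lp.single 2 n 1

/-- The resolvent `(H - z)⁻¹` of a bounded operator (junk value `0` if `H - z`
is not invertible). -/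
def res {d : ℕ} (H : L2 d →L[ℂ] L2 d) (z : ℂ) : L2 d →L[ℂ] L2 d :=
  Ring.inverse (H - z • (1 : L2 d →L[ℂ] L2 d))

/-- The Green function: matrix elements `(H - z)⁻¹(a, b) = ⟨δ_b, (H - z)⁻¹ δ_a⟩`. -/
def grn {d : ℕ} (H : L2 d →L[ℂ] L2 d) (z : ℂ) (a b : Site d) : ℂ :=
  inner ℂ (dl b) (res H z (dl a))

/-- `H` is the bounded operator on `ℓ²(ℤ^d)` acting as the Schrödinger
difference operator with potential `V`. -/
def IsSchrodingerOp {d : ℕ} (H : L2 d →L[ℂ] L2 d) (V : Site d → ℝ) : Prop :=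
  (∃ M, ∀ n, |V n| ≤ M) ∧ ∀ (u : L2 d) (n : Site d), (H u) n = schrOp V (fun m => u m) n

/-- The indicator function `χ_L` of the cube `Λ_L = {n : |n| ≤ L}`. -/
def chiL {d : ℕ} (L : ℕ) (n : Site d) : ℂ := if supN n ≤ L then 1 else 0

/-- The boundary term `R_{L,ψ}(m) = ∑_{|k|=1} (χ_L(m+k) - χ_L(m)) ψ(m+k)`. -/
def bdryR {d : ℕ} (L : ℕ) (ψ : Site d → ℂ) (m : Site d) : ℂ :=
  ∑ ν : Fin d,
    ((chiL L (Function.update m ν (m ν + 1)) - chiL L m) * ψ (Function.update m ν (m ν + 1)) +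
     (chiL L (Function.update m ν (m ν - 1)) - chiL L m) * ψ (Function.update m ν (m ν - 1)))

/-- The unitary time evolution `e^{-itH}`. -/
def timeEv {d : ℕ} (H : L2 d →L[ℂ] L2 d) (t : ℝ) : L2 d →L[ℂ] L2 d :=
  NormedSpace.exp ((-(t : ℂ) * I) • H)

/-!
Let `χ` be the indicator of the cube `Λ_L(n₀)`. The vector `χψ` is finitely supported, and since
`Hψ = Eψ` the vector `(H - E)(χψ)` is the commutator term `R(m) = ∑_{|k|=1} (χ(m+k) - χ(m)) ψ(m+k)`,
supported on the shell `∂̄Λ_L(n₀)`, because only edges crossing the cube boundary contribute.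
Charging each term to the site `m + k` where `ψ` is evaluated gives `‖R‖₁ ≤ 2d ∑_{∂̄Λ_L(n₀)} |ψ|`,
and even `≤ d ∑ |ψ|` when `L ≥ 1`, since then no site has crossing edges on both sides in one
direction.

Inverting `H - E` gives `ψ(n₀) = ∑_m R(m) G(m, n₀)`. For `L ≥ 1`, the Combes–Thomas bound at
distance `≥ L` gives the claim. For `L = 0` that bound is a factor `2` too weak, so we use
`‖(H - E)⁻¹‖ ≤ 1/δ` instead, which holds because `H` is self-adjoint.
-/

theorem IsSelfAdjoint.norm_ringInverse_sub_algebraMap_le {A : Type*} [CStarAlgebra A]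
    [Nontrivial A] {a : A} (ha : IsSelfAdjoint a) {E : ℝ} (hE : (E : ℂ) ∉ spectrum ℂ a) :
    ‖Ring.inverse (a - algebraMap ℂ A E)‖ ≤ (Metric.infDist (E : ℂ) (spectrum ℂ a))⁻¹ := by
  have hsa : IsSelfAdjoint (Ring.inverse (a - algebraMap ℂ A E)) :=
    (ha.sub (IsSelfAdjoint.algebraMap A (Complex.conj_ofReal E))).ringInverse
  obtain ⟨u, hu⟩ : IsUnit (a - algebraMap ℂ A E) := by
    simpa using (spectrum.notMem_iff.1 hE).neg
  rw [← hu, Ring.inverse_unit] at hsa ⊢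
  obtain ⟨z, hz, hnorm⟩ := spectrum.exists_nnnorm_eq_spectralRadius (↑u⁻¹ : A)
  rw [hsa.spectralRadius_eq_nnnorm, ENNReal.coe_inj] at hnorm
  have hmem : z⁻¹ + E ∈ spectrum ℂ a := by
    rw [spectrum.add_mem_iff, neg_add_eq_sub, ← hu]
    exact spectrum.inv₀_mem_iff.2 hz
  have hdist : Metric.infDist (E : ℂ) (spectrum ℂ a) ≤ ‖z⁻¹‖ := by
    simpa [dist_eq_norm] using Metric.infDist_le_dist_of_mem (x := (E : ℂ)) hmem
  have hpos : 0 < Metric.infDist (E : ℂ) (spectrum ℂ a) :=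
    ((spectrum.isClosed a).notMem_iff_infDist_pos (spectrum.nonempty a)).1 hE
  rw [← coe_nnnorm, ← hnorm, coe_nnnorm, ← inv_inv ‖z‖, ← norm_inv]
  exact inv_anti₀ hpos hdist

namespace DiscreteSchrodinger

variable {d : ℕ}

lemma supN_le_iff {x : Site d} {r : ℕ} : supN x ≤ r ↔ ∀ ν, (x ν).natAbs ≤ r := by
  simp [supN, Finset.sup_le_iff]

lemma natAbs_le_supN (x : Site d) (ν : Fin d) : (x ν).natAbs ≤ supN x :=
  Finset.le_sup (f := fun ν => (x ν).natAbs) (Finset.mem_univ ν)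

lemma supN_add_le (x y : Site d) : supN (x + y) ≤ supN x + supN y :=
  supN_le_iff.2 fun ν => (Int.natAbs_add_le _ _).trans
    (add_le_add (natAbs_le_supN x ν) (natAbs_le_supN y ν))

lemma supN_neg (x : Site d) : supN (-x) = supN x := by
  simp [supN]

lemma update_add_eq_add_single (x : Site d) (ν : Fin d) (s : ℤ) :
    Function.update x ν (x ν + s) = x + Pi.single ν s := by
  ext μ
  rcases eq_or_ne μ ν with rfl | h <;> simp [*]

lemma supN_add_single_le_iff {x : Site d} {ν : Fin d} {s : ℤ} {r : ℕ} :
    supN (x + Pi.single ν s) ≤ r ↔ (x ν + s).natAbs ≤ r ∧ ∀ μ ≠ ν, (x μ).natAbs ≤ r := by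
  rw [← update_add_eq_add_single, supN_le_iff]
  exact Function.forall_update_iff x fun _ a => a.natAbs ≤ r

def unitVec (ν : Fin d) : Site d := Pi.single ν 1

lemma supN_unitVec_le (ν : Fin d) : supN (unitVec ν) ≤ 1 :=
  supN_le_iff.2 fun μ => by
    rcases eq_or_ne μ ν with rfl | h <;> simp [unitVec, *]

lemma lapOp_eq_sum (u : Site d → ℂ) (n : Site d) :
    lapOp u n = ∑ ν, (u (n + unitVec ν) + u (n - unitVec ν)) := by
  simp only [lapOp, unitVec, sub_eq_add_neg, update_add_eq_add_single, Pi.single_neg]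

def cubeInd (n₀ : Site d) (L : ℕ) (n : Site d) : ℂ := chiL L (n - n₀)

def cube (n₀ : Site d) (r : ℕ) : Finset (Site d) :=
  Fintype.piFinset fun ν => Finset.Icc (n₀ ν - r) (n₀ ν + r)

def shell (n₀ : Site d) (L : ℕ) : Finset (Site d) :=
  (cube n₀ (L + 1)).filter fun n => supN (n - n₀) = L ∨ supN (n - n₀) = L + 1

section Cube

variable {n₀ n x : Site d} {L r : ℕ}

lemma mem_cube : n ∈ cube n₀ r ↔ supN (n - n₀) ≤ r := by
  rw [cube, Fintype.mem_piFinset, supN_le_iff]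
  refine forall_congr' fun μ => ?_
  rw [Finset.mem_Icc, Pi.sub_apply]
  omega

lemma mem_shell : n ∈ shell n₀ L ↔ supN (n - n₀) = L ∨ supN (n - n₀) = L + 1 := by
  rw [shell, Finset.mem_filter, mem_cube, and_iff_right_iff_imp]
  omega

lemma norm_cubeInd_sub_le : ‖cubeInd n₀ L n - cubeInd n₀ L x‖ ≤ 1 := by
  unfold cubeInd chiL
  split_ifs <;> simp

lemma mem_shell_of_cubeInd_ne (h : cubeInd n₀ L n ≠ cubeInd n₀ L x) (hx : supN (x - n) ≤ 1) :
    n ∈ shell n₀ L := by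
  have h₁ : supN (x - n₀) ≤ supN (n - n₀) + 1 := by
    simpa [sub_add_sub_cancel'] using (supN_add_le (x - n) (n - n₀)).trans (by omega)
  have h₂ : supN (n - n₀) ≤ supN (x - n₀) + 1 := by
    have := supN_add_le (-(x - n)) (x - n₀)
    rw [supN_neg, neg_sub, sub_add_sub_cancel] at this
    omega
  unfold cubeInd chiL at h
  rw [mem_shell]
  split_ifs at h <;> simp_all <;> omega

lemma cubeInd_add_eq_or_sub_eq (hL : 1 ≤ L) (n : Site d) (ν : Fin d) :
    cubeInd n₀ L (n + unitVec ν) = cubeInd n₀ L n ∨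
      cubeInd n₀ L (n - unitVec ν) = cubeInd n₀ L n := by
  have hstep (s : ℤ) : cubeInd n₀ L (n + Pi.single ν s) =
      if (n ν - n₀ ν + s).natAbs ≤ L ∧ ∀ μ ≠ ν, (n μ - n₀ μ).natAbs ≤ L then 1 else 0 := by
    rw [cubeInd, chiL, add_sub_right_comm]
    exact if_congr supN_add_single_le_iff rfl rfl
  have h₀ := hstep 0
  rw [Pi.single_zero, add_zero] at h₀
  rw [unitVec, sub_eq_add_neg, ← Pi.single_neg, hstep, hstep, h₀]
  split_ifs <;> simp_all <;> omega

end Cube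

def cutoffCommutator (χ ψ : Site d → ℂ) (m : Site d) : ℂ :=
  ∑ ν, ((χ (m + unitVec ν) - χ m) * ψ (m + unitVec ν) +
    (χ (m - unitVec ν) - χ m) * ψ (m - unitVec ν))

lemma schrOp_mul_sub_eq_cutoffCommutator {V : Site d → ℝ} {E : ℂ} {ψ : Site d → ℂ}
    (hψ : ∀ n, schrOp V ψ n = E * ψ n) (χ : Site d → ℂ) (m : Site d) :
    schrOp V (fun k => χ k * ψ k) m - E * (χ m * ψ m) = cutoffCommutator χ ψ m := by
  have hm := hψ m
  simp only [schrOp, lapOp_eq_sum] at hm ⊢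
  simp only [cutoffCommutator, sub_mul, Finset.sum_add_distrib, Finset.sum_sub_distrib,
    ← Finset.mul_sum] at hm ⊢
  linear_combination χ m * hm

lemma sum_comp_add_le_of_support_subset {G : Type*} [AddGroup G] [DecidableEq G]
    (s t : Finset G) {F : G → ℝ} (hF : ∀ n, 0 ≤ F n) (hsupp : ∀ n, F n ≠ 0 → n ∈ t) (e : G) :
    ∑ m ∈ s, F (m + e) ≤ ∑ n ∈ t, F n :=
  calc ∑ m ∈ s, F (m + e) = ∑ n ∈ s.map (addRightEmbedding e), F n :=
        (Finset.sum_map s (addRightEmbedding e) F).symm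
    _ = ∑ n ∈ (s.map (addRightEmbedding e)).filter (· ∈ t), F n :=
        (Finset.sum_filter_of_ne fun n _ h => hsupp n h).symm
    _ ≤ ∑ n ∈ t, F n := Finset.sum_le_sum_of_subset_of_nonneg
        (fun _ hn => (Finset.mem_filter.1 hn).2) fun n _ _ => hF n

section Commutator

variable {χ : Site d → ℂ} {B : Finset (Site d)}

lemma cutoffCommutator_eq_zero_of_notMem (ψ : Site d → ℂ)
    (hB : ∀ n x, χ n ≠ χ x → supN (x - n) ≤ 1 → n ∈ B) {m : Site d} (hm : m ∉ B) :
    cutoffCommutator χ ψ m = 0 := by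
  have hflat (x : Site d) (hx : supN (x - m) ≤ 1) : χ x = χ m :=
    not_not.1 fun h => hm (hB m x (Ne.symm h) hx)
  refine Finset.sum_eq_zero fun ν _ => ?_
  rw [hflat (m + unitVec ν) (by simpa using supN_unitVec_le ν),
    hflat (m - unitVec ν) (by simpa [supN_neg] using supN_unitVec_le ν)]
  ring

lemma sum_norm_cutoffCommutator_le (ψ : Site d → ℂ)
    (hB : ∀ n x, χ n ≠ χ x → supN (x - n) ≤ 1 → n ∈ B) {κ : ℝ}
    (hκ : ∀ n ν, ‖χ n - χ (n - unitVec ν)‖ + ‖χ n - χ (n + unitVec ν)‖ ≤ κ) :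
    ∑ m ∈ B, ‖cutoffCommutator χ ψ m‖ ≤ d * κ * ∑ n ∈ B, ‖ψ n‖ := by
  -- `F ν n` and `G ν n` are the terms of edges in direction `ν` whose far endpoint is `n`
  set F : Fin d → Site d → ℝ := fun ν n => ‖χ n - χ (n - unitVec ν)‖ * ‖ψ n‖
  set G : Fin d → Site d → ℝ := fun ν n => ‖χ n - χ (n + unitVec ν)‖ * ‖ψ n‖
  have hF (ν n) : F ν n ≠ 0 → n ∈ B := fun h =>
    hB n (n - unitVec ν) (fun he => h (by simp only [F, he, sub_self, norm_zero, zero_mul]))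
      (by simpa [supN_neg] using supN_unitVec_le ν)
  have hG (ν n) : G ν n ≠ 0 → n ∈ B := fun h =>
    hB n (n + unitVec ν) (fun he => h (by simp only [G, he, sub_self, norm_zero, zero_mul]))
      (by simpa using supN_unitVec_le ν)
  calc ∑ m ∈ B, ‖cutoffCommutator χ ψ m‖
      ≤ ∑ m ∈ B, ∑ ν, (F ν (m + unitVec ν) + G ν (m + -unitVec ν)) := by
        refine Finset.sum_le_sum fun m _ => (norm_sum_le _ _).trans <|
          Finset.sum_le_sum fun ν _ => (norm_add_le _ _).trans_eq ?_
        simp only [F, G, norm_mul, add_sub_cancel_right, ← sub_eq_add_neg, sub_add_cancel]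
    _ = ∑ ν, (∑ m ∈ B, F ν (m + unitVec ν) + ∑ m ∈ B, G ν (m + -unitVec ν)) := by
        rw [Finset.sum_comm]
        simp only [Finset.sum_add_distrib]
    _ ≤ ∑ ν, (∑ n ∈ B, F ν n + ∑ n ∈ B, G ν n) := by
        refine Finset.sum_le_sum fun ν _ => add_le_add ?_ ?_
        · exact sum_comp_add_le_of_support_subset B B (fun n => by positivity) (hF ν) _
        · exact sum_comp_add_le_of_support_subset B B (fun n => by positivity) (hG ν) _
    _ = ∑ n ∈ B, (∑ ν, (‖χ n - χ (n - unitVec ν)‖ + ‖χ n - χ (n + unitVec ν)‖)) * ‖ψ n‖ := by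
        simp only [F, G, ← Finset.sum_add_distrib, Finset.sum_mul, add_mul]
        exact Finset.sum_comm
    _ ≤ ∑ n ∈ B, d * κ * ‖ψ n‖ := by
        gcongr with n
        simpa using Finset.sum_le_sum fun ν (_ : ν ∈ Finset.univ) => hκ n ν
    _ = d * κ * ∑ n ∈ B, ‖ψ n‖ := (Finset.mul_sum ..).symm

end Commutator

lemma sum_norm_cutoffCommutator_cubeInd_le (n₀ : Site d) (L : ℕ) (ψ : Site d → ℂ) :
    ∑ m ∈ shell n₀ L, ‖cutoffCommutator (cubeInd n₀ L) ψ m‖ ≤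
      d * 2 * ∑ n ∈ shell n₀ L, ‖ψ n‖ :=
  sum_norm_cutoffCommutator_le ψ (fun _ _ h hx => mem_shell_of_cubeInd_ne h hx) fun _ _ =>
    add_le_add norm_cubeInd_sub_le norm_cubeInd_sub_le |>.trans_eq one_add_one_eq_two

lemma sum_norm_cutoffCommutator_cubeInd_le_of_one_le (n₀ : Site d) {L : ℕ} (hL : 1 ≤ L)
    (ψ : Site d → ℂ) :
    ∑ m ∈ shell n₀ L, ‖cutoffCommutator (cubeInd n₀ L) ψ m‖ ≤
      d * ∑ n ∈ shell n₀ L, ‖ψ n‖ := by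
  rw [← mul_one (d : ℝ)]
  refine sum_norm_cutoffCommutator_le ψ (fun _ _ h hx => mem_shell_of_cubeInd_ne h hx)
    fun n ν => ?_
  rcases cubeInd_add_eq_or_sub_eq (n₀ := n₀) hL n ν with h | h
  · simpa [h] using norm_cubeInd_sub_le
  · simpa [h] using norm_cubeInd_sub_le

section Hilbert

variable {H : L2 d →L[ℂ] L2 d} {z : ℂ}

instance : Nontrivial (L2 d) := ⟨dl 0, 0, fun h => by simpa [dl] using congr($h 0)⟩

lemma sum_smul_dl_apply (s : Finset (Site d)) (f : Site d → ℂ) (m : Site d) :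
    (∑ n ∈ s, f n • dl n : L2 d) m = if m ∈ s then f m else 0 := by
  rw [lp.coeFn_sum, Finset.sum_apply]
  simp [dl, Pi.single_apply]

lemma norm_dl (n : Site d) : ‖dl n‖ = 1 := by
  simp [dl, lp.norm_single]

lemma norm_sum_smul_dl_le (s : Finset (Site d)) (f : Site d → ℂ) :
    ‖∑ n ∈ s, f n • dl n‖ ≤ ∑ n ∈ s, ‖f n‖ :=
  (norm_sum_le _ _).trans_eq (by simp [norm_smul, norm_dl])

lemma inner_dl_left (n : Site d) (u : L2 d) : inner ℂ (dl n) u = u n := by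
  simp [dl, lp.inner_single_left]

lemma isUnit_sub_smul_one (hz : z ∉ spectrum ℂ H) : IsUnit (H - z • 1) := by
  simpa [Algebra.algebraMap_eq_smul_one] using (spectrum.notMem_iff.1 hz).neg

lemma res_apply_sub_smul (hz : z ∉ spectrum ℂ H) (u : L2 d) : res H z (H u - z • u) = u := by
  simpa [res] using congr($(Ring.inverse_mul_cancel _ (isUnit_sub_smul_one hz)) u)

lemma apply_eq_sum_grn (hz : z ∉ spectrum ℂ H) {u : L2 d} {s : Finset (Site d)}
    {f : Site d → ℂ} (hu : H u - z • u = ∑ m ∈ s, f m • dl m) (n : Site d) :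
    u n = ∑ m ∈ s, f m * grn H z m n := by
  rw [← inner_dl_left, ← res_apply_sub_smul hz u, hu, map_sum, inner_sum]
  simp [grn, inner_smul_right]

lemma norm_res_le_of_isSelfAdjoint (hSA : IsSelfAdjoint H) {E : ℝ}
    (hE : (E : ℂ) ∉ spectrum ℂ H) :
    ‖res H E‖ ≤ (Metric.infDist (E : ℂ) (spectrum ℂ H))⁻¹ := by
  simpa [res, Algebra.algebraMap_eq_smul_one] using
    IsSelfAdjoint.norm_ringInverse_sub_algebraMap_le hSA hE

end Hilbert

def cutoffVec (n₀ : Site d) (L : ℕ) (ψ : Site d → ℂ) : L2 d := ∑ n ∈ cube n₀ L, ψ n • dl n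

section Eigenfunction

variable {V : Site d → ℝ} {H : L2 d →L[ℂ] L2 d} {ψ : Site d → ℂ} (n₀ : Site d)

lemma coe_cutoffVec (L : ℕ) : ⇑(cutoffVec n₀ L ψ) = cubeInd n₀ L * ψ := by
  ext m
  simp only [cutoffVec, sum_smul_dl_apply, Pi.mul_apply, cubeInd, chiL, ← mem_cube]
  split_ifs <;> simp

lemma cutoffVec_apply_self (L : ℕ) : cutoffVec n₀ L ψ n₀ = ψ n₀ := by
  simp [coe_cutoffVec, cubeInd, chiL, supN]

lemma apply_sub_smul_cutoffVec (L : ℕ) {E : ℂ}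
    (hH : ∀ (u : L2 d) n, H u n = schrOp V (fun m => u m) n)
    (hψ : ∀ n, schrOp V ψ n = E * ψ n) :
    H (cutoffVec n₀ L ψ) - E • cutoffVec n₀ L ψ =
      ∑ m ∈ shell n₀ L, cutoffCommutator (cubeInd n₀ L) ψ m • dl m := by
  ext m
  rw [lp.coeFn_sub, Pi.sub_apply, lp.coeFn_smul, Pi.smul_apply, hH, sum_smul_dl_apply,
    smul_eq_mul]
  simp only [coe_cutoffVec, Pi.mul_apply]
  rw [schrOp_mul_sub_eq_cutoffCommutator hψ]
  split_ifs with hm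
  · rfl
  · exact cutoffCommutator_eq_zero_of_notMem ψ (fun _ _ h hx => mem_shell_of_cubeInd_ne h hx) hm

theorem norm_apply_le_of_isSelfAdjoint (L : ℕ)
    (hH : ∀ (u : L2 d) n, H u n = schrOp V (fun m => u m) n) {E : ℝ}
    (hψ : ∀ n, schrOp V ψ n = E * ψ n) (hSA : IsSelfAdjoint H)
    (hE : (E : ℂ) ∉ spectrum ℂ H) :
    ‖ψ n₀‖ ≤ (Metric.infDist (E : ℂ) (spectrum ℂ H))⁻¹ * (d * 2 * ∑ n ∈ shell n₀ L, ‖ψ n‖) :=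
  calc ‖ψ n₀‖ = ‖cutoffVec n₀ L ψ n₀‖ := by rw [cutoffVec_apply_self]
    _ ≤ ‖cutoffVec n₀ L ψ‖ := lp.norm_apply_le_norm two_ne_zero _ _
    _ = ‖res H E (∑ m ∈ shell n₀ L, cutoffCommutator (cubeInd n₀ L) ψ m • dl m)‖ := by
      rw [← apply_sub_smul_cutoffVec n₀ L hH hψ, res_apply_sub_smul hE]
    _ ≤ (Metric.infDist (E : ℂ) (spectrum ℂ H))⁻¹ *
        ∑ m ∈ shell n₀ L, ‖cutoffCommutator (cubeInd n₀ L) ψ m‖ :=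
      (ContinuousLinearMap.le_opNorm _ _).trans <| mul_le_mul
        (norm_res_le_of_isSelfAdjoint hSA hE) (norm_sum_smul_dl_le _ _) (norm_nonneg _)
        (inv_nonneg.2 Metric.infDist_nonneg)
    _ ≤ _ := mul_le_mul_of_nonneg_left (sum_norm_cutoffCommutator_cubeInd_le n₀ L ψ)
      (inv_nonneg.2 Metric.infDist_nonneg)

theorem norm_apply_le_of_grn_le_exp {L : ℕ} (hL : 1 ≤ L)
    (hH : ∀ (u : L2 d) n, H u n = schrOp V (fun m => u m) n) {E : ℂ}
    (hψ : ∀ n, schrOp V ψ n = E * ψ n) (hE : E ∉ spectrum ℂ H) {C μ : ℝ} (hμ : 0 ≤ μ)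
    (hG : ∀ m, ‖grn H E m n₀‖ ≤ C * Real.exp (-μ * supN (m - n₀))) :
    ‖ψ n₀‖ ≤ C * Real.exp (-μ * L) * (d * ∑ n ∈ shell n₀ L, ‖ψ n‖) := by
  have hC : 0 ≤ C :=
    nonneg_of_mul_nonneg_left ((norm_nonneg _).trans (hG n₀)) (Real.exp_pos _)
  have hG_shell (m) (hm : m ∈ shell n₀ L) : ‖grn H E m n₀‖ ≤ C * Real.exp (-μ * L) := by
    refine (hG m).trans ?_
    have : L ≤ supN (m - n₀) := by rcases mem_shell.1 hm with h | h <;> omega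
    rw [neg_mul, neg_mul]
    gcongr
  calc ‖ψ n₀‖ = ‖∑ m ∈ shell n₀ L, cutoffCommutator (cubeInd n₀ L) ψ m * grn H E m n₀‖ := by
        rw [← apply_eq_sum_grn hE (apply_sub_smul_cutoffVec n₀ L hH hψ), cutoffVec_apply_self]
    _ ≤ ∑ m ∈ shell n₀ L, ‖cutoffCommutator (cubeInd n₀ L) ψ m‖ * (C * Real.exp (-μ * L)) :=
      (norm_sum_le _ _).trans <| Finset.sum_le_sum fun m hm => by
        rw [norm_mul]
        gcongr
        exact hG_shell m hm
    _ ≤ _ := by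
      rw [← Finset.sum_mul, mul_comm]
      gcongr
      exact sum_norm_cutoffCommutator_cubeInd_le_of_one_le n₀ hL ψ

end Eigenfunction

lemma tsum_subtype_shell (n₀ : Site d) (L : ℕ) (f : Site d → ℝ) :
    ∑' n : {n : Site d // supN (n - n₀) = L ∨ supN (n - n₀) = L + 1}, f n =
      ∑ n ∈ shell n₀ L, f n := by
  rw [← Finset.tsum_subtype]
  exact ((Equiv.subtypeEquivRight fun _ => mem_shell).tsum_eq
    fun n : {n : Site d // supN (n - n₀) = L ∨ supN (n - n₀) = L + 1} => f n).symm

end DiscreteSchrodinger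

open DiscreteSchrodinger in
/-- If the Combes–Thomas estimate holds at `E ∉ σ(H)` (with
`δ = dist(E, σ(H))`, constant `c > 0`) and `ψ` is a generalized eigenfunction with
generalized eigenvalue `E`, then for every `L` and `n₀`:
`∑_{n ∈ ∂̄Λ_L(n₀)} |ψ(n)| ≥ (δ/(2d)) e^{cδL} |ψ(n₀)|`. -/
theorem eigenfunction_boundary_lower_bound {d : ℕ} (V : Site d → ℝ)
    (H : L2 d →L[ℂ] L2 d) (hH : IsSchrodingerOp H V) (hSA : IsSelfAdjoint H)
    (E : ℝ) (hE : (E : ℂ) ∉ spectrum ℂ H)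
    (δ : ℝ) (hδ : δ = Metric.infDist (E : ℂ) (spectrum ℂ H))
    (c : ℝ) (hc : 0 < c)
    (hCT : ∀ n m : Site d,
      ‖grn H (E : ℂ) n m‖ ≤ (2 / δ) * Real.exp (-c * δ * (supN (n - m) : ℝ)))
    (ψ : Site d → ℂ) (hψ : ∀ n, schrOp V ψ n = (E : ℂ) * ψ n)
    (L : ℕ) (n₀ : Site d) :
    (δ / (2 * d)) * Real.exp (c * δ * L) * ‖ψ n₀‖ ≤
      ∑' n : {n : Site d // supN (n - n₀) = L ∨ supN (n - n₀) = L + 1}, ‖ψ (n : Site d)‖ := by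
  have hδ_pos : 0 < δ :=
    hδ ▸ ((spectrum.isClosed H).notMem_iff_infDist_pos (spectrum.nonempty H)).1 hE
  set S := ∑ n ∈ shell n₀ L, ‖ψ n‖
  have hbound : ‖ψ n₀‖ ≤ 2 * d / δ * Real.exp (-(c * δ) * L) * S := by
    rcases Nat.eq_zero_or_pos L with rfl | hL
    · convert norm_apply_le_of_isSelfAdjoint n₀ 0 hH.2 hψ hSA hE using 1
      rw [← hδ, Nat.cast_zero, mul_zero, Real.exp_zero]
      ring
    · convert norm_apply_le_of_grn_le_exp n₀ hL hH.2 hψ hE (C := 2 / δ) (μ := c * δ)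
        (by positivity) fun m => (hCT m n₀).trans_eq (by simp only [neg_mul]) using 1
      ring
  rw [tsum_subtype_shell n₀ L fun n => ‖ψ n‖]
  calc δ / (2 * d) * Real.exp (c * δ * L) * ‖ψ n₀‖
      ≤ δ / (2 * d) * Real.exp (c * δ * L) * (2 * d / δ * Real.exp (-(c * δ) * L) * S) := by
        gcongr
    _ = δ / (2 * d) * (2 * d / δ) * S := by
        rw [neg_mul, Real.exp_neg]
        field_simp
    _ ≤ S := by
        refine mul_le_of_le_one_left (Finset.sum_nonneg fun _ _ => norm_nonneg _) ?_
        rw [div_mul_div_comm, mul_comm δ]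
        exact div_self_le_one _
end
end

section
/- Let $m \ge 1$ and consider the free discrete Laplacian $H_0$ on $\mathbb{Z} \times \mathbb{Z}^m$, $H_0 u(x) = \sum_{|j|=1} u(x+j)$. For any $E \in (-2(m+1), 2(m+1))$ there exists a nonzero function $\psi : \mathbb{Z} \times \mathbb{Z}^m \to \mathbb{C}$ solving $H_0 \psi = E \psi$ pointwise such that $\sup_{k \in \mathbb{Z}} \sum_{n \in \mathbb{Z}^m} |\psi(k,n)|^2 < \infty$. -/
noncomputable section
open Complex Real MeasureTheory Filter
open scoped ENNReal NNReal

/-!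
Identify `θ ∈ 𝕋^m` with `2πx`, `x ∈ ℝ^m/ℤ^m`. On the set `S_E` where `|E - ∑ⱼ 2 cos θⱼ| < 2`, the
angle `θ₁⁺ = arccos ((E - ∑ⱼ 2 cos θⱼ) / 2)` solves `2 cos θ₁⁺ + ∑ⱼ 2 cos θⱼ = E`, so the functions
`F_k = 1_{S_E} e^{ikθ₁⁺}` satisfy `F_{k+1} + F_{k-1} + (∑ⱼ 2 cos θⱼ) F_k = E F_k`. Taking Fourier
coefficients in `θ` turns multiplication by `2 cos θⱼ` into the sum of the shifts by `±eⱼ`, so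
`ψ(k, n) = F̂_k(n)` solves `H₀ ψ = E ψ`. Parseval bounds `∑ₙ |ψ(k, n)|²` by `‖F_k‖²_{L²} ≤ 1`, and
`ψ(0, 0) = |S_E| > 0` because `S_E` is open and, by the intermediate value theorem, nonempty.
-/

open UnitAddTorus

/- Mathlib's Fourier theory on `UnitAddTorus` is stated for this normalised Haar measure, which is
not syntactically the global `volume` on `AddCircle 1`. -/
attribute [local instance] instMeasureSpaceUnitAddCircle instIsProbabilityMeasureUnitAddCircleVolume
  instIsAddHaarMeasureUnitAddCircleVolume

lemma Complex.exp_succ_mul_I_add_exp_pred_mul_I (k : ℤ) (a : ℝ) :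
    exp ((k + 1 : ℤ) * a * I) + exp ((k - 1 : ℤ) * a * I) =
      (2 * Real.cos a : ℝ) * exp (k * a * I) := by
  rw [ofReal_mul, ofReal_cos, ofReal_ofNat, two_cos, add_mul, ← exp_add, ← exp_add]
  push_cast
  ring_nf

namespace UnitAddTorus

variable {d : Type*} [Fintype d]

lemma mFourier_add_single [DecidableEq d] (n : d → ℤ) (ν : d) (j : ℤ) (x : UnitAddTorus d) :
    mFourier (n + Pi.single ν j) x = mFourier n x * fourier j (x ν) := by
  rw [mFourier_add]
  congr 1
  simp only [mFourier, ContinuousMap.coe_mk]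
  rw [Fintype.prod_eq_single ν fun μ hμ => by simp [Pi.single_eq_of_ne hμ], Pi.single_eq_same]

section Coefficients

variable {E : Type*} [NormedAddCommGroup E] [NormedSpace ℂ E]

lemma integrable_mFourier_smul {f : UnitAddTorus d → E} (hf : Integrable f) (n : d → ℤ) :
    Integrable fun x => mFourier n x • f x :=
  hf.bdd_smul 1 (mFourier n).continuous.aestronglyMeasurable (ae_of_all _ fun x =>
    ((mFourier n).norm_coe_le_norm x).trans mFourier_norm.le)

lemma mFourierCoeff_add {f g : UnitAddTorus d → E} (hf : Integrable f) (hg : Integrable g)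
    (n : d → ℤ) : mFourierCoeff (f + g) n = mFourierCoeff f n + mFourierCoeff g n := by
  simp only [mFourierCoeff, Pi.add_apply, smul_add]
  exact integral_add (integrable_mFourier_smul hf _) (integrable_mFourier_smul hg _)

lemma mFourierCoeff_sum {ι : Type*} (s : Finset ι) {f : ι → UnitAddTorus d → E}
    (hf : ∀ i ∈ s, Integrable (f i)) (n : d → ℤ) :
    mFourierCoeff (fun x => ∑ i ∈ s, f i x) n = ∑ i ∈ s, mFourierCoeff (f i) n := by
  simp only [mFourierCoeff, Finset.smul_sum]
  exact integral_finsetSum s fun i hi => integrable_mFourier_smul (hf i hi) _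

lemma mFourierCoeff_const_smul (f : UnitAddTorus d → E) (c : ℂ) (n : d → ℤ) :
    mFourierCoeff (c • f) n = c • mFourierCoeff f n := by
  simp only [mFourierCoeff, Pi.smul_apply, smul_comm _ c]
  exact integral_smul c _

lemma mFourierCoeff_congr_ae {f g : UnitAddTorus d → E} (h : f =ᵐ[volume] g) :
    mFourierCoeff f = mFourierCoeff g :=
  funext fun _ => integral_congr_ae <| by filter_upwards [h] with x hx; rw [hx]

end Coefficients

lemma mFourierCoeff_add_single [DecidableEq d] (f : UnitAddTorus d → ℂ) (n : d → ℤ) (ν : d)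
    (j : ℤ) :
    mFourierCoeff f (n + Pi.single ν j) = mFourierCoeff (fun x => fourier (-j) (x ν) * f x) n := by
  simp only [mFourierCoeff, neg_add, ← Pi.single_neg, mFourier_add_single, smul_eq_mul, mul_assoc]

lemma tsum_sq_mFourierCoeff {f : UnitAddTorus d → ℂ} (hf : MemLp f 2) :
    ∑' n, ‖mFourierCoeff f n‖ ^ 2 = ∫ x, ‖f x‖ ^ 2 := by
  have h := hf.coeFn_toLp
  rw [← mFourierCoeff_congr_ae h, (hasSum_sq_mFourierCoeff (hf.toLp f)).tsum_eq]
  exact integral_congr_ae <| by filter_upwards [h] with x hx; rw [hx]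

lemma integrable_fourier_apply_mul {f : UnitAddTorus d → ℂ} (hf : Integrable f) (ν : d) (j : ℤ) :
    Integrable fun x => fourier j (x ν) * f x :=
  hf.bdd_mul (c := 1) ((fourier j).continuous.comp (continuous_apply ν)).aestronglyMeasurable
    (ae_of_all _ fun x => by simp [fourier_apply, Circle.norm_coe])

/-- `∑ ν, 2 cos 2πx_ν`, the multiplier of the lattice Laplacian on Fourier series. -/
def laplacianSymbol (x : UnitAddTorus d) : ℝ := ∑ ν, 2 * (fourier 1 (x ν) : ℂ).re

lemma continuous_laplacianSymbol : Continuous (laplacianSymbol (d := d)) := by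
  unfold laplacianSymbol
  have := (fourier (T := 1) 1).continuous
  fun_prop

lemma laplacianSymbol_zero : laplacianSymbol (0 : UnitAddTorus d) = 2 * Fintype.card d := by
  simp [laplacianSymbol, mul_comm]

lemma laplacianSymbol_const_half :
    laplacianSymbol (fun _ => ((1 / 2 : ℝ) : UnitAddCircle) : UnitAddTorus d) =
      -2 * Fintype.card d := by
  have : (fourier 1 ((1 / 2 : ℝ) : UnitAddCircle) : ℂ) = -1 := by
    rw [fourier_coe_apply, ← Complex.exp_pi_mul_I]
    congr 1
    push_cast
    ring
  simp only [laplacianSymbol, this, Complex.neg_re, Complex.one_re, Finset.sum_const,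
    Finset.card_univ, nsmul_eq_mul]
  ring

lemma mFourierCoeff_laplacianSymbol_mul [DecidableEq d] {f : UnitAddTorus d → ℂ}
    (hf : Integrable f) (n : d → ℤ) :
    mFourierCoeff (fun x => (laplacianSymbol x : ℂ) * f x) n =
      ∑ ν, (mFourierCoeff f (Function.update n ν (n ν + 1)) +
        mFourierCoeff f (Function.update n ν (n ν - 1))) := by
  have update_eq (ν : d) (j : ℤ) : Function.update n ν (n ν + j) = n + Pi.single ν j := by
    ext μ
    rcases eq_or_ne μ ν with rfl | h <;> simp [*]
  simp only [sub_eq_add_neg, update_eq, mFourierCoeff_add_single,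
    ← mFourierCoeff_add (integrable_fourier_apply_mul hf _ _) (integrable_fourier_apply_mul hf _ _)]
  rw [← mFourierCoeff_sum _ fun ν _ =>
    (integrable_fourier_apply_mul hf _ _).add (integrable_fourier_apply_mul hf _ _)]
  congr 1
  ext x
  simp only [laplacianSymbol, Pi.add_apply, ← add_mul, neg_neg, fourier_neg, ← Finset.sum_mul,
    add_comm, Complex.add_conj]
  push_cast
  rfl

end UnitAddTorus

namespace FreeLaplacian

variable {d : Type*} [Fintype d] (E : ℝ)

/-- The paper's `S_E`, in the coordinates `θ = 2πx`. -/
def energyShell : Set (UnitAddTorus d) := {x | |E - laplacianSymbol x| < 2}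

/-- The paper's `θ₁⁺`. -/
def transverseAngle (x : UnitAddTorus d) : ℝ := Real.arccos ((E - laplacianSymbol x) / 2)

def planeWave (k : ℤ) : UnitAddTorus d → ℂ :=
  (energyShell E).indicator fun x => Complex.exp (k * transverseAngle E x * Complex.I)

def partialEigenfunction (p : ℤ × (d → ℤ)) : ℂ := mFourierCoeff (planeWave E p.1) p.2

lemma isOpen_energyShell : IsOpen (energyShell (d := d) E) :=
  isOpen_lt (by have := continuous_laplacianSymbol (d := d); fun_prop) continuous_const

lemma energyShell_nonempty (hE : |E| < 2 * (Fintype.card d + 1)) :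
    (energyShell (d := d) E).Nonempty := by
  set N : ℝ := 2 * Fintype.card d with hN
  -- the symbol takes every value in `[-N, N]`; clamp `E` into that interval
  obtain ⟨x, hx⟩ : max (-N) (min E N) ∈ Set.range (laplacianSymbol (d := d)) := by
    refine intermediate_value_univ (fun _ => ((1 / 2 : ℝ) : UnitAddCircle) : UnitAddTorus d) 0
      continuous_laplacianSymbol ?_
    rw [laplacianSymbol_zero, laplacianSymbol_const_half, neg_mul, ← hN]
    constructor <;> simp [N]
  refine ⟨x, ?_⟩
  rw [energyShell, Set.mem_ofPred, hx]
  rw [abs_lt] at hE ⊢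
  constructor <;> cases max_cases (-N) (min E N) <;> cases min_cases E N <;> linarith

lemma two_mul_cos_transverseAngle {x : UnitAddTorus d} (hx : x ∈ energyShell E) :
    2 * Real.cos (transverseAngle E x) = E - laplacianSymbol x := by
  rw [energyShell, Set.mem_ofPred, abs_lt] at hx
  rw [transverseAngle, Real.cos_arccos] <;> linarith

lemma planeWave_succ_add_planeWave_pred (k : ℤ) (x : UnitAddTorus d) :
    planeWave E (k + 1) x + planeWave E (k - 1) x =
      (E - laplacianSymbol x : ℂ) * planeWave E k x := by
  by_cases hx : x ∈ energyShell E
  · simp only [planeWave, Set.indicator_of_mem hx, Complex.exp_succ_mul_I_add_exp_pred_mul_I,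
      two_mul_cos_transverseAngle E hx]
    push_cast
    ring
  · simp [planeWave, Set.indicator_of_notMem hx]

lemma norm_planeWave_le_one (k : ℤ) (x : UnitAddTorus d) : ‖planeWave E k x‖ ≤ 1 := by
  by_cases hx : x ∈ energyShell E
  · simp [planeWave, Set.indicator_of_mem hx, ← Complex.ofReal_intCast, ← Complex.ofReal_mul,
      Complex.norm_exp_ofReal_mul_I]
  · simp [planeWave, Set.indicator_of_notMem hx]

lemma aestronglyMeasurable_planeWave (k : ℤ) :
    AEStronglyMeasurable (planeWave (d := d) E k) := by
  refine AEStronglyMeasurable.indicator ?_ (isOpen_energyShell E).measurableSet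
  have : Continuous (transverseAngle (d := d) E) :=
    Real.continuous_arccos.comp (by have := continuous_laplacianSymbol (d := d); fun_prop)
  fun_prop

lemma memLp_planeWave (k : ℤ) (p : ℝ≥0∞) : MemLp (planeWave (d := d) E k) p :=
  MemLp.of_bound (aestronglyMeasurable_planeWave E k) 1 (ae_of_all _ (norm_planeWave_le_one E k))

lemma partialEigenfunction_eq [DecidableEq d] (k : ℤ) (n : d → ℤ) :
    partialEigenfunction E (k + 1, n) + partialEigenfunction E (k - 1, n) +
      ∑ ν, (partialEigenfunction E (k, Function.update n ν (n ν + 1)) +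
        partialEigenfunction E (k, Function.update n ν (n ν - 1))) =
      E * partialEigenfunction E (k, n) := by
  have hwave (j : ℤ) : Integrable (planeWave (d := d) E j) :=
    memLp_one_iff_integrable.mp (memLp_planeWave E j 1)
  have hsymbol : Integrable fun x : UnitAddTorus d => (laplacianSymbol x : ℂ) * planeWave E k x :=
    integrableOn_univ.mp <| ((hwave k).locallyIntegrable.continuous_mul
      (by have := continuous_laplacianSymbol (d := d); fun_prop)).integrableOn_isCompact
        isCompact_univ
  simp only [partialEigenfunction]
  rw [← mFourierCoeff_laplacianSymbol_mul (hwave k), ← mFourierCoeff_add (hwave _) (hwave _),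
    ← mFourierCoeff_add ((hwave _).add (hwave _)) hsymbol, ← smul_eq_mul,
    ← mFourierCoeff_const_smul]
  congr 1
  ext x
  simp only [Pi.add_apply, planeWave_succ_add_planeWave_pred, Pi.smul_apply, smul_eq_mul]
  ring

lemma partialEigenfunction_zero :
    partialEigenfunction (d := d) E (0, 0) = volume.real (energyShell (d := d) E) := by
  have : planeWave (d := d) E 0 = (energyShell E).indicator fun _ => 1 := by
    simp [planeWave]
  simp [partialEigenfunction, mFourierCoeff, mFourier_zero, this,
    integral_indicator_const _ (isOpen_energyShell E).measurableSet]

lemma partialEigenfunction_ne_zero (hE : |E| < 2 * (Fintype.card d + 1)) :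
    partialEigenfunction (d := d) E ≠ 0 := by
  have hpos : 0 < volume.real (energyShell (d := d) E) :=
    ENNReal.toReal_pos ((isOpen_energyShell E).measure_pos _ (energyShell_nonempty E hE)).ne'
      (measure_ne_top _ _)
  intro h
  have := partialEigenfunction_zero (d := d) E
  rw [h, Pi.zero_apply, eq_comm, Complex.ofReal_eq_zero] at this
  exact hpos.ne' this

lemma tsum_sq_partialEigenfunction_le_one (k : ℤ) :
    ∑' n, ‖partialEigenfunction (d := d) E (k, n)‖ ^ 2 ≤ 1 := by
  simp only [partialEigenfunction]
  rw [tsum_sq_mFourierCoeff (memLp_planeWave E k 2)]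
  calc ∫ x, ‖planeWave E k x‖ ^ 2 ≤ ∫ _ : UnitAddTorus d, (1 : ℝ) :=
        integral_mono_of_nonneg (ae_of_all _ fun _ => by positivity) (integrable_const _)
          (ae_of_all _ fun x => pow_le_one₀ (norm_nonneg _) (norm_planeWave_le_one E k x))
    _ = 1 := by simp

end FreeLaplacian

theorem free_laplacian_partially_l2_eigenfunction_general (m : ℕ)
    (E : ℝ) (hE : |E| < 2 * (m + 1)) :
    ∃ ψ : ℤ × Site m → ℂ, ψ ≠ 0 ∧
      (∀ (k : ℤ) (n : Site m),
        ψ (k + 1, n) + ψ (k - 1, n) +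
          ∑ ν : Fin m,
            (ψ (k, Function.update n ν (n ν + 1)) + ψ (k, Function.update n ν (n ν - 1)))
          = (E : ℂ) * ψ (k, n)) ∧
      ∃ B : ℝ, ∀ k : ℤ, ∑' n : Site m, ‖ψ (k, n)‖ ^ 2 ≤ B :=
  ⟨FreeLaplacian.partialEigenfunction E,
    FreeLaplacian.partialEigenfunction_ne_zero E (by simpa using hE),
    FreeLaplacian.partialEigenfunction_eq E, 1, FreeLaplacian.tsum_sq_partialEigenfunction_le_one E⟩

/-- For the free discrete Laplacian on `ℤ × ℤ^m`, `m ≥ 1`, and any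
`E ∈ (-2(m+1), 2(m+1))`, there is a nonzero pointwise solution `ψ` of `H₀ ψ = E ψ`
whose `ℓ²`-norm in the last `m` variables is bounded uniformly in the first variable. -/
theorem free_laplacian_partially_l2_eigenfunction (m : ℕ) (hm : 1 ≤ m)
    (E : ℝ) (hE : |E| < 2 * (m + 1)) :
    ∃ ψ : ℤ × Site m → ℂ, ψ ≠ 0 ∧
      (∀ (k : ℤ) (n : Site m),
        ψ (k + 1, n) + ψ (k - 1, n) +
          ∑ ν : Fin m,
            (ψ (k, Function.update n ν (n ν + 1)) + ψ (k, Function.update n ν (n ν - 1)))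
          = (E : ℂ) * ψ (k, n)) ∧
      ∃ B : ℝ, ∀ k : ℤ, ∑' n : Site m, ‖ψ (k, n)‖ ^ 2 ≤ B :=
  free_laplacian_partially_l2_eigenfunction_general m E hE
end
end
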